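/- arXiv:1402.0604 — 2 statements merged into one kernel-verified Lean document; each statement's English description precedes it below -/
import Mathlib

section
/- For h > 0 let v₁(x) = h^{−1/4} e^{−x²/(2h)}. Then −h² v₁''(x) + (x² + 1)v₁(x) = (1 + h)v₁(x) for all x ∈ ℝ, and there exists C > 0 such that for all h ∈ (0,1]: ‖v₁‖_{L²(−1/2,1/2)} ≥ C^{−1} and ‖v₁‖_{H¹_h({1/2<|x|<1})} ≤ C e^{−1/(10h)}. -/
/-
On the region `1/2 < |x| < 1` both `v₁` and `h v₁' = -x v₁` are bounded by
`h^{-1/4} e^{-1/(8h)}`, and the spare factor `e^{-1/(40h)}` beats the power of `h`. On the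
interval `|x| < √h / 2` of length `√h` one has `v₁² ≥ h^{-1/2} e^{-1/4}`, which gives the
lower bound on the `L²` norm.
-/

open MeasureTheory Set Real

noncomputable section

/-- The `L²` norm of `u` over the set `I`. -/
def l2Norm (I : Set ℝ) (u : ℝ → ℝ) : ℝ :=
  Real.sqrt (∫ x in I, ‖u x‖ ^ 2)

/-- The semiclassical `H¹_h` norm of `u` (with derivative `u'`) over the set `I`. -/
def h1Norm (h : ℝ) (I : Set ℝ) (u u' : ℝ → ℝ) : ℝ :=
  Real.sqrt ((∫ x in I, ‖u x‖ ^ 2) + ∫ x in I, ‖h * u' x‖ ^ 2)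

/-- The Gaussian `v₁(x) = h^{-1/4} e^{-x²/(2h)}`. -/
def gaussQuasimode (h : ℝ) (x : ℝ) : ℝ :=
  h ^ (-(1 / 4 : ℝ)) * Real.exp (-(x ^ 2) / (2 * h))

theorem inv_sqrt_mul_exp_neg_div_le {a h : ℝ} (ha : 0 < a) (hh : 0 < h) :
    (√h)⁻¹ * exp (-a / h) ≤ √h / a := by
  have hexp : exp (-a / h) ≤ h / a := by
    rw [neg_div, exp_neg, ← inv_div a h]
    exact inv_anti₀ (by positivity)
      ((le_add_of_nonneg_right zero_le_one).trans (add_one_le_exp (a / h)))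
  calc (√h)⁻¹ * exp (-a / h) ≤ (√h)⁻¹ * (h / a) := by gcongr
    _ = √h / a := by
      nth_rewrite 2 [← mul_self_sqrt hh.le]
      field_simp

theorem hasDerivAt_gaussQuasimode (h x : ℝ) :
    HasDerivAt (gaussQuasimode h) (-(x / h) * gaussQuasimode h x) x := by
  have hexponent : HasDerivAt (fun y : ℝ => -(y ^ 2) / (2 * h)) (-(x / h)) x :=
    ((hasDerivAt_pow 2 x).neg.div_const (2 * h)).congr_deriv (by ring)
  exact ((hexponent.exp).const_mul _).congr_deriv (by unfold gaussQuasimode; ring)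

theorem deriv_gaussQuasimode (h : ℝ) :
    deriv (gaussQuasimode h) = fun x => -(x / h) * gaussQuasimode h x :=
  funext fun x => (hasDerivAt_gaussQuasimode h x).deriv

theorem deriv_deriv_gaussQuasimode (h x : ℝ) :
    deriv (deriv (gaussQuasimode h)) x = (x ^ 2 / h ^ 2 - 1 / h) * gaussQuasimode h x := by
  rw [deriv_gaussQuasimode]
  have hlin : HasDerivAt (fun y : ℝ => -(y / h)) (-(1 / h)) x :=
    ((hasDerivAt_id x).div_const h).neg
  exact ((hlin.mul (hasDerivAt_gaussQuasimode h x)).congr_deriv (by ring)).deriv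

theorem gaussQuasimode_harmonicOscillator {h : ℝ} (hh : h ≠ 0) (x : ℝ) :
    -h ^ 2 * deriv (deriv (gaussQuasimode h)) x + (x ^ 2 + 1) * gaussQuasimode h x
      = (1 + h) * gaussQuasimode h x := by
  rw [deriv_deriv_gaussQuasimode]
  field_simp
  ring

theorem continuous_gaussQuasimode (h : ℝ) : Continuous (gaussQuasimode h) := by
  unfold gaussQuasimode
  fun_prop

theorem gaussQuasimode_sq {h : ℝ} (hh : 0 ≤ h) (x : ℝ) :
    gaussQuasimode h x ^ 2 = (√h)⁻¹ * exp (-x ^ 2 / h) := by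
  rw [gaussQuasimode, mul_pow, ← rpow_natCast, ← rpow_mul hh, ← exp_nat_mul, sqrt_eq_rpow,
    ← rpow_neg hh]
  congr 2 <;> ring

theorem norm_mul_deriv_gaussQuasimode_sq {h : ℝ} (hh : h ≠ 0) (x : ℝ) :
    ‖h * deriv (gaussQuasimode h) x‖ ^ 2 = x ^ 2 * gaussQuasimode h x ^ 2 := by
  rw [deriv_gaussQuasimode, Real.norm_eq_abs, sq_abs]
  field_simp

theorem gaussQuasimode_sq_le_of_le_sq {h : ℝ} (hh : 0 < h) {r x : ℝ} (hx : r ≤ x ^ 2) :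
    gaussQuasimode h x ^ 2 ≤ (√h)⁻¹ * exp (-r / h) := by
  rw [gaussQuasimode_sq hh.le]
  gcongr

theorem le_gaussQuasimode_sq_of_sq_le {h : ℝ} (hh : 0 < h) {r x : ℝ} (hx : x ^ 2 ≤ r) :
    (√h)⁻¹ * exp (-r / h) ≤ gaussQuasimode h x ^ 2 := by
  rw [gaussQuasimode_sq hh.le]
  gcongr

theorem exp_neg_quarter_le_setIntegral_gaussQuasimode_sq {h : ℝ} (hh : 0 < h) (h1 : h ≤ 1) :
    exp (-(1 / 4)) ≤ ∫ x in Ioo (-(1 / 2) : ℝ) (1 / 2), ‖gaussQuasimode h x‖ ^ 2 := by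
  have hsqrt : √h ≤ 1 := sqrt_le_one.mpr h1
  have hcore : Ioo (-(√h / 2)) (√h / 2) ⊆ Ioo (-(1 / 2) : ℝ) (1 / 2) :=
    Ioo_subset_Ioo (by linarith) (by linarith)
  have hint : ∀ a b : ℝ, IntegrableOn (fun x => ‖gaussQuasimode h x‖ ^ 2) (Ioo a b) := fun a b =>
    ((continuous_gaussQuasimode h).norm.pow 2).integrableOn_Icc.mono_set Ioo_subset_Icc_self
  have hpointwise : ∀ x ∈ Ioo (-(√h / 2)) (√h / 2),
      (√h)⁻¹ * exp (-(h / 4) / h) ≤ ‖gaussQuasimode h x‖ ^ 2 := by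
    intro x hx
    rw [Real.norm_eq_abs, sq_abs]
    refine le_gaussQuasimode_sq_of_sq_le hh ?_
    have := sq_lt_sq' hx.1 hx.2
    nlinarith [sq_sqrt hh.le]
  calc exp (-(1 / 4))
      = (√h)⁻¹ * exp (-(h / 4) / h) * volume.real (Ioo (-(√h / 2)) (√h / 2)) := by
        rw [measureReal_def, volume_Ioo, ENNReal.toReal_ofReal (by linarith [sqrt_nonneg h])]
        field_simp
        norm_num
    _ ≤ ∫ x in Ioo (-(√h / 2)) (√h / 2), ‖gaussQuasimode h x‖ ^ 2 :=
        setIntegral_ge_of_const_le_real measurableSet_Ioo measure_Ioo_lt_top.ne hpointwise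
          (hint _ _)
    _ ≤ ∫ x in Ioo (-(1 / 2) : ℝ) (1 / 2), ‖gaussQuasimode h x‖ ^ 2 :=
        setIntegral_mono_set (hint _ _) (Filter.Eventually.of_forall fun _ => by positivity)
          hcore.eventuallyLE

theorem setIntegral_annulus_gaussQuasimode_le {h : ℝ} (hh : 0 < h) :
    (∫ x in {x : ℝ | 1 / 2 < |x| ∧ |x| < 1}, ‖gaussQuasimode h x‖ ^ 2)
        + ∫ x in {x : ℝ | 1 / 2 < |x| ∧ |x| < 1}, ‖h * deriv (gaussQuasimode h) x‖ ^ 2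
      ≤ 4 * ((√h)⁻¹ * exp (-(1 / 4) / h)) := by
  set A := {x : ℝ | 1 / 2 < |x| ∧ |x| < 1}
  set M := (√h)⁻¹ * exp (-(1 / 4) / h)
  have hsq : ∀ x ∈ A, 1 / 4 ≤ x ^ 2 ∧ x ^ 2 ≤ 1 := fun x hx => by
    rw [← sq_abs]
    constructor <;> nlinarith [hx.1, hx.2]
  have hA : A ⊆ Icc (-1) 1 := fun x hx => abs_le.mp hx.2.le
  have hvol : volume.real A ≤ 2 := by
    calc volume.real A ≤ volume.real (Icc (-1 : ℝ) 1) :=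
          measureReal_mono hA measure_Icc_lt_top.ne
      _ = 2 := by norm_num [measureReal_def]
  have hvol_lt : volume A < ⊤ := (measure_mono hA).trans_lt measure_Icc_lt_top
  have hv : ∀ x ∈ A, ‖‖gaussQuasimode h x‖ ^ 2‖ ≤ M := fun x hx => by
    rw [norm_pow, norm_norm, Real.norm_eq_abs, sq_abs]
    exact gaussQuasimode_sq_le_of_le_sq hh (hsq x hx).1
  have hdv : ∀ x ∈ A, ‖‖h * deriv (gaussQuasimode h) x‖ ^ 2‖ ≤ M := fun x hx => by
    rw [norm_pow, norm_norm, norm_mul_deriv_gaussQuasimode_sq hh.ne']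
    calc x ^ 2 * gaussQuasimode h x ^ 2 ≤ 1 * M :=
          mul_le_mul (hsq x hx).2 (gaussQuasimode_sq_le_of_le_sq hh (hsq x hx).1)
            (sq_nonneg _) zero_le_one
      _ = M := one_mul M
  have hv_int := (le_norm_self _).trans (norm_setIntegral_le_of_norm_le_const hvol_lt hv)
  have hdv_int := (le_norm_self _).trans (norm_setIntegral_le_of_norm_le_const hvol_lt hdv)
  have hvolM : M * volume.real A ≤ M * 2 := mul_le_mul_of_nonneg_left hvol (by positivity)
  linarith

theorem four_mul_inv_sqrt_mul_exp_le_sq {h : ℝ} (hh : 0 < h) (h1 : h ≤ 1) :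
    4 * ((√h)⁻¹ * exp (-(1 / 4) / h)) ≤ (10 * exp (-1 / (10 * h))) ^ 2 := by
  have hsplit : exp (-(1 / 4) / h) = exp (-(1 / 20) / h) * exp (-1 / (10 * h)) ^ 2 := by
    rw [← exp_nat_mul, ← exp_add]
    congr 1
    field_simp
    ring
  have hdecay : (√h)⁻¹ * exp (-(1 / 20) / h) ≤ 20 :=
    (inv_sqrt_mul_exp_neg_div_le (by norm_num) hh).trans (by linarith [sqrt_le_one.mpr h1])
  rw [hsplit, ← mul_assoc]
  nlinarith [sq_nonneg (exp (-1 / (10 * h)))]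

/-- The Gaussian `v₁(x) = h^{-1/4} e^{-x²/(2h)}` is an exact eigenfunction of
`-h²∂ₓ² + x² + 1` with eigenvalue `1 + h`; its `L²` norm on `(-1/2, 1/2)` is bounded below and
its `H¹_h` norm on `{1/2 < |x| < 1}` is `O(e^{-1/(10h)})`, uniformly for `h ∈ (0, 1]`. -/
theorem gaussian_harmonic_oscillator_quasimode :
    ∃ C > (0 : ℝ), ∀ h : ℝ, 0 < h → h ≤ 1 →
      (∀ x : ℝ,
        -h ^ 2 * deriv (deriv (gaussQuasimode h)) x + (x ^ 2 + 1) * gaussQuasimode h x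
          = (1 + h) * gaussQuasimode h x) ∧
      C⁻¹ ≤ l2Norm (Set.Ioo (-(1 / 2) : ℝ) (1 / 2)) (gaussQuasimode h) ∧
      h1Norm h {x : ℝ | 1 / 2 < |x| ∧ |x| < 1} (gaussQuasimode h) (deriv (gaussQuasimode h))
        ≤ C * Real.exp (-1 / (10 * h)) := by
  refine ⟨10, by norm_num, fun h hh h1 => ⟨gaussQuasimode_harmonicOscillator hh.ne', ?_, ?_⟩⟩
  · have hexp : (10 : ℝ)⁻¹ ^ 2 ≤ exp (-(1 / 4)) := by
      linarith [add_one_le_exp (-(1 / 4))]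
    calc (10 : ℝ)⁻¹ ≤ √(exp (-(1 / 4))) := le_sqrt_of_sq_le hexp
      _ ≤ _ := sqrt_le_sqrt (exp_neg_quarter_le_setIntegral_gaussQuasimode_sq hh h1)
  · rw [h1Norm, ← sqrt_sq (by positivity : 0 ≤ 10 * exp (-1 / (10 * h)))]
    exact sqrt_le_sqrt ((setIntegral_annulus_gaussQuasimode_le hh).trans
      (four_mul_inv_sqrt_mul_exp_le_sq hh h1))
end
end

section
/- Let h > 0, E₀ ∈ ℝ, V : [2,3.5] → ℝ continuous, and let v, w ∈ C²([2,3.5];ℂ) satisfy −h²v'' + (V−E₀)v = 0 and −h²w'' + (V−E₀)w = 0 on [2,3.5]. Then the Wronskian W(v,w) is constant on [2,3.5] and its value satisfies |W(v,w)| ≤ 4 ‖v‖_{H¹_h(2,2.5)} ‖w‖_{H¹_h(2,2.5)}. -/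
open MeasureTheory Set Real

/-!
If `v'' = q v` and `w'' = q w`, then `(v w' - w v')' = v w'' - w v'' = 0`, so the Wronskian is
constant. On `(2, 2.5)` that constant is bounded at every point, by AM–GM with a free weight
`t > 0`, by `(t (|v|² + |h v'|²) + t⁻¹ (|w|² + |h w'|²)) / 2`. Integrating over an interval of
length `1/2` gives `|W| ≤ t ‖v‖² + t⁻¹ ‖w‖²` in `H¹_h(2, 2.5)`, and optimising in `t` gives
`|W| ≤ 2 ‖v‖ ‖w‖`.
-/

section Wronskian

variable {𝔸 : Type*} [NormedCommRing 𝔸] [NormedAlgebra ℝ 𝔸] {v v' v'' w w' w'' : ℝ → 𝔸}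

theorem hasDerivAt_wronskian {x : ℝ} (hv : HasDerivAt v (v' x) x)
    (hv' : HasDerivAt v' (v'' x) x) (hw : HasDerivAt w (w' x) x)
    (hw' : HasDerivAt w' (w'' x) x) :
    HasDerivAt (fun y => v y * w' y - w y * v' y) (v x * w'' x - w x * v'' x) x :=
  ((hv.mul hw').sub (hw.mul hv')).congr_deriv (by ring)

theorem wronskian_eq_of_deriv2_eq_mul {a b : ℝ} {q : ℝ → 𝔸}
    (hv : ∀ x ∈ Icc a b, HasDerivAt v (v' x) x) (hv' : ∀ x ∈ Icc a b, HasDerivAt v' (v'' x) x)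
    (hw : ∀ x ∈ Icc a b, HasDerivAt w (w' x) x) (hw' : ∀ x ∈ Icc a b, HasDerivAt w' (w'' x) x)
    (hveq : ∀ x ∈ Icc a b, v'' x = q x * v x) (hweq : ∀ x ∈ Icc a b, w'' x = q x * w x) :
    ∀ x ∈ Icc a b, v x * w' x - w x * v' x = v a * w' a - w a * v' a := by
  have hW : ∀ x ∈ Icc a b,
      HasDerivAt (fun y => v y * w' y - w y * v' y) (v x * w'' x - w x * v'' x) x :=
    fun x hx => hasDerivAt_wronskian (hv x hx) (hv' x hx) (hw x hx) (hw' x hx)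
  refine constant_of_has_deriv_right_zero
    (fun x hx => (hW x hx).continuousAt.continuousWithinAt) fun x hx => ?_
  have hx := Ico_subset_Icc_self hx
  have hzero : v x * w'' x - w x * v'' x = 0 := by
    rw [hveq x hx, hweq x hx]
    ring
  exact (hzero ▸ hW x hx).hasDerivWithinAt

end Wronskian

theorem two_mul_mul_le_mul_sq_add_inv_mul_sq {t : ℝ} (ht : 0 < t) (x y : ℝ) :
    2 * (x * y) ≤ t * x ^ 2 + t⁻¹ * y ^ 2 := by
  have hsq : t * x ^ 2 + t⁻¹ * y ^ 2 - 2 * (x * y) = t⁻¹ * (t * x - y) ^ 2 := by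
    field_simp
    ring
  linarith [show 0 ≤ t⁻¹ * (t * x - y) ^ 2 by positivity]

theorem norm_mul_sub_mul_le {R : Type*} [SeminormedRing R] {t : ℝ} (ht : 0 < t) (a b c d : R) :
    ‖a * d - b * c‖ ≤ (t * (‖a‖ ^ 2 + ‖c‖ ^ 2) + t⁻¹ * (‖b‖ ^ 2 + ‖d‖ ^ 2)) / 2 := by
  have had := two_mul_mul_le_mul_sq_add_inv_mul_sq ht ‖a‖ ‖d‖
  have hcb := two_mul_mul_le_mul_sq_add_inv_mul_sq ht ‖c‖ ‖b‖
  calc ‖a * d - b * c‖ ≤ ‖a‖ * ‖d‖ + ‖c‖ * ‖b‖ := by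
        grw [norm_sub_le, norm_mul_le, norm_mul_le, mul_comm ‖b‖]
    _ ≤ _ := by linarith

theorem norm_mul_length_le_of_eq_mul_sub_mul_on_Ioo {R : Type*} [SeminormedRing R] {a b t : ℝ}
    (hab : a ≤ b) (ht : 0 < t) {c : R} {f₁ f₂ g₁ g₂ : ℝ → R}
    (hc : ∀ y ∈ Ioo a b, f₁ y * g₂ y - g₁ y * f₂ y = c)
    (hf₁ : ContinuousOn f₁ (Icc a b)) (hf₂ : ContinuousOn f₂ (Icc a b))
    (hg₁ : ContinuousOn g₁ (Icc a b)) (hg₂ : ContinuousOn g₂ (Icc a b)) :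
    ‖c‖ * (b - a) ≤
      (t * ((∫ y in Ioo a b, ‖f₁ y‖ ^ 2) + ∫ y in Ioo a b, ‖f₂ y‖ ^ 2)
        + t⁻¹ * ((∫ y in Ioo a b, ‖g₁ y‖ ^ 2) + ∫ y in Ioo a b, ‖g₂ y‖ ^ 2)) / 2 := by
  have hint {f : ℝ → R} (hf : ContinuousOn f (Icc a b)) :
      IntegrableOn (fun y => ‖f y‖ ^ 2) (Ioo a b) :=
    (hf.norm.pow 2).integrableOn_Icc.mono_set Ioo_subset_Icc_self
  have hf : IntegrableOn (fun y => ‖f₁ y‖ ^ 2 + ‖f₂ y‖ ^ 2) (Ioo a b) :=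
    (hint hf₁).add (hint hf₂)
  have hg : IntegrableOn (fun y => ‖g₁ y‖ ^ 2 + ‖g₂ y‖ ^ 2) (Ioo a b) :=
    (hint hg₁).add (hint hg₂)
  have hF : IntegrableOn (fun y => (t * (‖f₁ y‖ ^ 2 + ‖f₂ y‖ ^ 2)
      + t⁻¹ * (‖g₁ y‖ ^ 2 + ‖g₂ y‖ ^ 2)) / 2) (Ioo a b) :=
    ((hf.const_mul t).add (hg.const_mul t⁻¹)).div_const 2
  have hbound := setIntegral_ge_of_const_le_real measurableSet_Ioo measure_Ioo_lt_top.ne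
    (fun y hy => hc y hy ▸ norm_mul_sub_mul_le ht (f₁ y) (g₁ y) (f₂ y) (g₂ y)) hF
  rwa [Real.volume_real_Ioo_of_le hab, integral_div, integral_add (hf.const_mul t)
    (hg.const_mul t⁻¹), integral_const_mul, integral_const_mul, integral_add (hint hf₁) (hint hf₂),
    integral_add (hint hg₁) (hint hg₂)] at hbound

theorem le_two_mul_sqrt_mul_sqrt_of_forall_pos {K A B : ℝ} (hA : 0 ≤ A) (hB : 0 ≤ B)
    (hK : ∀ t > 0, K ≤ t * A + t⁻¹ * B) : K ≤ 2 * √A * √B := by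
  set a := √A
  set b := √B
  have ha : 0 ≤ a := sqrt_nonneg A
  have hb : 0 ≤ b := sqrt_nonneg B
  refine le_of_forall_pos_le_add fun ε hε => ?_
  set δ := ε / (a + b + 1)
  have hδ : 0 < δ := by positivity
  have hδε : δ * (a + b) ≤ ε := by
    rw [div_mul_eq_mul_div, div_le_iff₀ (by positivity)]
    nlinarith
  -- `t = (b + δ) / (a + δ)` is a perturbation of the optimal weight `b / a`.
  have hA' : (b + δ) / (a + δ) * A ≤ (b + δ) * a := by
    rw [← sq_sqrt hA, div_mul_eq_mul_div, div_le_iff₀ (by positivity)]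
    nlinarith [mul_nonneg ha (add_nonneg hb hδ.le)]
  have hB' : ((b + δ) / (a + δ))⁻¹ * B ≤ (a + δ) * b := by
    rw [inv_div, ← sq_sqrt hB, div_mul_eq_mul_div, div_le_iff₀ (by positivity)]
    nlinarith [mul_nonneg hb (add_nonneg ha hδ.le)]
  linarith [hK ((b + δ) / (a + δ)) (by positivity)]

theorem wronskian_constant_and_small_general
    (h : ℝ) (hh : 0 < h) (E₀ : ℝ)
    (V : ℝ → ℝ)
    (v v' v'' w w' w'' : ℝ → ℂ)
    (hv : ∀ x ∈ Set.Icc (2 : ℝ) 3.5, HasDerivAt v (v' x) x)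
    (hv' : ∀ x ∈ Set.Icc (2 : ℝ) 3.5, HasDerivAt v' (v'' x) x)
    (hw : ∀ x ∈ Set.Icc (2 : ℝ) 3.5, HasDerivAt w (w' x) x)
    (hw' : ∀ x ∈ Set.Icc (2 : ℝ) 3.5, HasDerivAt w' (w'' x) x)
    (hveq : ∀ x ∈ Set.Icc (2 : ℝ) 3.5,
      -(h : ℂ) ^ 2 * v'' x + ((V x - E₀ : ℝ) : ℂ) * v x = 0)
    (hweq : ∀ x ∈ Set.Icc (2 : ℝ) 3.5,
      -(h : ℂ) ^ 2 * w'' x + ((V x - E₀ : ℝ) : ℂ) * w x = 0) :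
    (∀ x ∈ Set.Icc (2 : ℝ) 3.5, ∀ y ∈ Set.Icc (2 : ℝ) 3.5,
      v x * ((h : ℂ) * w' x) - w x * ((h : ℂ) * v' x)
        = v y * ((h : ℂ) * w' y) - w y * ((h : ℂ) * v' y)) ∧
    (∀ x ∈ Set.Icc (2 : ℝ) 3.5,
      ‖v x * ((h : ℂ) * w' x) - w x * ((h : ℂ) * v' x)‖
        ≤ 4 * Real.sqrt ((∫ y in Set.Ioo (2 : ℝ) 2.5, ‖v y‖ ^ 2)
              + ∫ y in Set.Ioo (2 : ℝ) 2.5, ‖(h : ℂ) * v' y‖ ^ 2)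
          * Real.sqrt ((∫ y in Set.Ioo (2 : ℝ) 2.5, ‖w y‖ ^ 2)
              + ∫ y in Set.Ioo (2 : ℝ) 2.5, ‖(h : ℂ) * w' y‖ ^ 2)) := by
  have hh2 : (h : ℂ) ^ 2 ≠ 0 := pow_ne_zero 2 (Complex.ofReal_ne_zero.2 hh.ne')
  have hsolve {u u'' : ℝ → ℂ} (hu : ∀ x ∈ Icc (2 : ℝ) 3.5,
      -(h : ℂ) ^ 2 * u'' x + ((V x - E₀ : ℝ) : ℂ) * u x = 0) :
      ∀ x ∈ Icc (2 : ℝ) 3.5, u'' x = ((V x - E₀ : ℝ) : ℂ) / (h : ℂ) ^ 2 * u x := fun x hx => by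
    rw [div_mul_eq_mul_div, eq_div_iff hh2]
    linear_combination -hu x hx
  have hW (x) (hx : x ∈ Icc (2 : ℝ) 3.5) : v x * ((h : ℂ) * w' x) - w x * ((h : ℂ) * v' x)
      = v 2 * ((h : ℂ) * w' 2) - w 2 * ((h : ℂ) * v' 2) := by
    linear_combination (h : ℂ) *
      wronskian_eq_of_deriv2_eq_mul hv hv' hw hw' (hsolve hveq) (hsolve hweq) x hx
  refine ⟨fun x hx y hy => (hW x hx).trans (hW y hy).symm, fun x hx => ?_⟩
  have hsub : Icc (2 : ℝ) 2.5 ⊆ Icc 2 3.5 := Icc_subset_Icc_right (by norm_num)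
  have hcont {u u' : ℝ → ℂ} (hu : ∀ x ∈ Icc (2 : ℝ) 3.5, HasDerivAt u (u' x) x) :
      ContinuousOn u (Icc 2 2.5) :=
    fun x hx => (hu x (hsub hx)).continuousAt.continuousWithinAt
  have hbound (t : ℝ) (ht : 0 < t) := norm_mul_length_le_of_eq_mul_sub_mul_on_Ioo (by norm_num) ht
    (f₂ := fun y => (h : ℂ) * v' y) (g₂ := fun y => (h : ℂ) * w' y)
    (fun y hy => hW y (hsub (Ioo_subset_Icc_self hy))) (hcont hv)
    (continuousOn_const.mul (hcont hv')) (hcont hw) (continuousOn_const.mul (hcont hw'))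
  set A := (∫ y in Ioo (2 : ℝ) 2.5, ‖v y‖ ^ 2) + ∫ y in Ioo (2 : ℝ) 2.5, ‖(h : ℂ) * v' y‖ ^ 2
  set B := (∫ y in Ioo (2 : ℝ) 2.5, ‖w y‖ ^ 2) + ∫ y in Ioo (2 : ℝ) 2.5, ‖(h : ℂ) * w' y‖ ^ 2
  rw [hW x hx]
  calc _ ≤ 2 * √A * √B := le_two_mul_sqrt_mul_sqrt_of_forall_pos (by positivity) (by positivity)
          fun t ht => by linarith [hbound t ht]
    _ ≤ 4 * √A * √B := by gcongr; norm_num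

/-- If `v, w ∈ C²([2, 3.5])` both solve `-h²f'' + (V - E₀)f = 0`, then
their semiclassical Wronskian `W(v,w) = v (h w') - w (h v')` is constant on `[2, 3.5]` and
satisfies `|W(v,w)| ≤ 4 ‖v‖_{H¹_h(2,2.5)} ‖w‖_{H¹_h(2,2.5)}`. -/
theorem wronskian_constant_and_small
    (h : ℝ) (hh : 0 < h) (E₀ : ℝ)
    (V : ℝ → ℝ) (hV : ContinuousOn V (Set.Icc (2 : ℝ) 3.5))
    (v v' v'' w w' w'' : ℝ → ℂ)
    (hv : ∀ x ∈ Set.Icc (2 : ℝ) 3.5, HasDerivAt v (v' x) x)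
    (hv' : ∀ x ∈ Set.Icc (2 : ℝ) 3.5, HasDerivAt v' (v'' x) x)
    (hw : ∀ x ∈ Set.Icc (2 : ℝ) 3.5, HasDerivAt w (w' x) x)
    (hw' : ∀ x ∈ Set.Icc (2 : ℝ) 3.5, HasDerivAt w' (w'' x) x)
    (hveq : ∀ x ∈ Set.Icc (2 : ℝ) 3.5,
      -(h : ℂ) ^ 2 * v'' x + ((V x - E₀ : ℝ) : ℂ) * v x = 0)
    (hweq : ∀ x ∈ Set.Icc (2 : ℝ) 3.5,
      -(h : ℂ) ^ 2 * w'' x + ((V x - E₀ : ℝ) : ℂ) * w x = 0) :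
    (∀ x ∈ Set.Icc (2 : ℝ) 3.5, ∀ y ∈ Set.Icc (2 : ℝ) 3.5,
      v x * ((h : ℂ) * w' x) - w x * ((h : ℂ) * v' x)
        = v y * ((h : ℂ) * w' y) - w y * ((h : ℂ) * v' y)) ∧
    (∀ x ∈ Set.Icc (2 : ℝ) 3.5,
      ‖v x * ((h : ℂ) * w' x) - w x * ((h : ℂ) * v' x)‖
        ≤ 4 * Real.sqrt ((∫ y in Set.Ioo (2 : ℝ) 2.5, ‖v y‖ ^ 2)
              + ∫ y in Set.Ioo (2 : ℝ) 2.5, ‖(h : ℂ) * v' y‖ ^ 2)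
          * Real.sqrt ((∫ y in Set.Ioo (2 : ℝ) 2.5, ‖w y‖ ^ 2)
              + ∫ y in Set.Ioo (2 : ℝ) 2.5, ‖(h : ℂ) * w' y‖ ^ 2)) :=
  wronskian_constant_and_small_general h hh E₀ V v v' v'' w w' w'' hv hv' hw hw' hveq hweq
end
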